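/- Under the control schedule u_i(t) = a b^t / h_i with a, b ∈ (0,1), the deviation satisfies ‖x'(T)‖_∞ ≤ exp(-a(1 - b^T)/(1-b))·‖x'(0)‖_∞ for every horizon T, and in particular lim sup_{t→∞} ‖x'(t)‖_∞ ≤ exp(-a/(1-b))·‖x'(0)‖_∞. -/
import Mathlib


open Filter

lemma mulVec_stochastic_norm_le {n : ℕ} (V : Matrix (Fin n) (Fin n) ℝ)
    (hVnonneg : ∀ i j, 0 ≤ V i j) (hVrow : ∀ i, ∑ j, V i j = 1)
    (x : Fin n → ℝ) : ‖V.mulVec x‖ ≤ ‖x‖ := by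
  rw [pi_norm_le_iff_of_nonneg (norm_nonneg x)]
  intro i
  rw [Matrix.mulVec, dotProduct, Real.norm_eq_abs]
  calc |∑ j, V i j * x j| ≤ ∑ j, |V i j * x j| := Finset.abs_sum_le_sum_abs _ _
    _ = ∑ j, V i j * |x j| := by
        refine Finset.sum_congr rfl fun j _ => ?_
        rw [abs_mul, abs_of_nonneg (hVnonneg i j)]
    _ ≤ ∑ j, V i j * ‖x‖ := by
        refine Finset.sum_le_sum fun j _ => ?_
        exact mul_le_mul_of_nonneg_left (norm_le_pi_norm x j) (hVnonneg i j)
    _ = ‖x‖ := by rw [← Finset.sum_mul, hVrow, one_mul]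

/-- Under the control schedule `u_i(t) = a b^t / h_i` (so `h_i u_i(t) = a b^t`),
the deviation of the controlled opinion dynamics satisfies
`‖x'(T)‖_∞ ≤ exp(-a(1-b^T)/(1-b)) ‖x'(0)‖_∞`, and its limsup is at most
`exp(-a/(1-b)) ‖x'(0)‖_∞`. -/
theorem deviation_bound_exponential_schedule {n : ℕ}
    (V : Matrix (Fin n) (Fin n) ℝ) (h : Fin n → ℝ) (u : ℕ → Fin n → ℝ)
    (a b : ℝ) (x' : ℕ → Fin n → ℝ)
    (hVnonneg : ∀ i j, 0 ≤ V i j)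
    (hVrow : ∀ i, ∑ j, V i j = 1)
    (ha : 0 < a) (ha1 : a < 1) (hb : 0 < b) (hb1 : b < 1)
    (hh : ∀ i, 0 < h i)
    (hu : ∀ t i, u t i = a * b ^ t / h i)
    (hdyn : ∀ t, x' (t + 1) =
      (V * (1 - Matrix.diagonal (fun i => h i * u t i))).mulVec (x' t)) :
    (∀ T, ‖x' T‖ ≤ Real.exp (-(a * (1 - b ^ T) / (1 - b))) * ‖x' 0‖) ∧
    limsup (fun t => ‖x' t‖) atTop ≤ Real.exp (-(a / (1 - b))) * ‖x' 0‖ := by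
  have hab : ∀ t : ℕ, 0 < a * b ^ t ∧ a * b ^ t ≤ a := by
    intro t
    constructor
    · positivity
    · calc a * b ^ t ≤ a * 1 := by
            apply mul_le_mul_of_nonneg_left _ ha.le
            exact pow_le_one₀ hb.le hb1.le
        _ = a := mul_one a
  -- rewrite dynamics
  have hdyn' : ∀ t, x' (t + 1) = (1 - a * b ^ t) • (V.mulVec (x' t)) := by
    intro t
    have hdiag : Matrix.diagonal (fun i => h i * u t i)
        = (a * b ^ t) • (1 : Matrix (Fin n) (Fin n) ℝ) := by
      have : (fun i => h i * u t i) = fun _ : Fin n => a * b ^ t := by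
        funext i
        rw [hu t i, mul_div_assoc', mul_comm (h i), mul_div_assoc,
          div_self (hh i).ne', mul_one]
      rw [this]
      ext i j
      by_cases hij : i = j <;>
        simp [Matrix.diagonal_apply, Matrix.one_apply, hij]
    rw [hdyn t, hdiag]
    have : (1 : Matrix (Fin n) (Fin n) ℝ) - (a * b ^ t) • 1
        = (1 - a * b ^ t) • (1 : Matrix (Fin n) (Fin n) ℝ) := by
      rw [sub_smul, one_smul]
    rw [this, Matrix.mul_smul, Matrix.mul_one, Matrix.smul_mulVec]
  -- one-step bound
  have hstep : ∀ t, ‖x' (t + 1)‖ ≤ Real.exp (-(a * b ^ t)) * ‖x' t‖ := by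
    intro t
    rw [hdyn' t, norm_smul, Real.norm_eq_abs]
    have h1 : |1 - a * b ^ t| = 1 - a * b ^ t := by
      rw [abs_of_nonneg]
      nlinarith [hab t]
    have h2 : 1 - a * b ^ t ≤ Real.exp (-(a * b ^ t)) := by
      have := Real.add_one_le_exp (-(a * b ^ t))
      linarith
    rw [h1]
    calc (1 - a * b ^ t) * ‖V.mulVec (x' t)‖
        ≤ (1 - a * b ^ t) * ‖x' t‖ := by
          apply mul_le_mul_of_nonneg_left (mulVec_stochastic_norm_le V hVnonneg hVrow _)
          nlinarith [hab t]
      _ ≤ Real.exp (-(a * b ^ t)) * ‖x' t‖ :=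
          mul_le_mul_of_nonneg_right h2 (norm_nonneg _)
  -- main bound via induction
  have hgeom : ∀ T : ℕ, a * (1 - b ^ T) / (1 - b) = ∑ s ∈ Finset.range T, a * b ^ s := by
    intro T
    rw [← Finset.mul_sum, geom_sum_eq (ne_of_lt hb1)]
    rw [show (b ^ T - 1) / (b - 1) = (1 - b ^ T) / (1 - b) by
      rw [← neg_sub (b ^ T) 1, ← neg_sub b 1, neg_div_neg_eq]]
    rw [mul_div_assoc]
  have hmain : ∀ T, ‖x' T‖ ≤ Real.exp (-(a * (1 - b ^ T) / (1 - b))) * ‖x' 0‖ := by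
    intro T
    rw [hgeom T]
    induction T with
    | zero => simp
    | succ T ih =>
      calc ‖x' (T + 1)‖ ≤ Real.exp (-(a * b ^ T)) * ‖x' T‖ := hstep T
        _ ≤ Real.exp (-(a * b ^ T)) *
            (Real.exp (-(∑ s ∈ Finset.range T, a * b ^ s)) * ‖x' 0‖) := by
            apply mul_le_mul_of_nonneg_left ih (Real.exp_pos _).le
        _ = Real.exp (-(∑ s ∈ Finset.range (T + 1), a * b ^ s)) * ‖x' 0‖ := by
            rw [← mul_assoc, ← Real.exp_add, Finset.sum_range_succ]
            congr 2
            ring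
  refine ⟨hmain, ?_⟩
  -- limsup bound
  have htend : Tendsto (fun T : ℕ => Real.exp (-(a * (1 - b ^ T) / (1 - b))) * ‖x' 0‖)
      atTop (nhds (Real.exp (-(a / (1 - b))) * ‖x' 0‖)) := by
    have hb0 : Tendsto (fun T : ℕ => b ^ T) atTop (nhds 0) :=
      tendsto_pow_atTop_nhds_zero_of_lt_one hb.le hb1
    have : Tendsto (fun T : ℕ => -(a * (1 - b ^ T) / (1 - b))) atTop
        (nhds (-(a * (1 - 0) / (1 - b)))) := by
      apply Tendsto.neg
      apply Tendsto.div_const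
      exact (tendsto_const_nhds.sub hb0).const_mul a
    simpa using (Real.continuous_exp.continuousAt.tendsto.comp this).mul_const ‖x' 0‖
  calc limsup (fun t => ‖x' t‖) atTop
      ≤ limsup (fun T : ℕ => Real.exp (-(a * (1 - b ^ T) / (1 - b))) * ‖x' 0‖) atTop := by
        exact limsup_le_limsup (Eventually.of_forall hmain)
          ((isBoundedUnder_of (⟨0, fun t => norm_nonneg (x' t)⟩ :
            ∃ c, ∀ t, ‖x' t‖ ≥ c)).isCoboundedUnder_le)
          htend.isBoundedUnder_le
    _ = Real.exp (-(a / (1 - b))) * ‖x' 0‖ := htend.limsup_eq
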